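/- Under the assumptions of the single-hop transient bound, if additionally the arrivals satisfy the (σ,ρ)-bound A(t)/A(u) ≤ e^{σ + ρ(t-u)} for all 0 ≤ u ≤ t, then P(W(t) > w) ≤ min_{s>0} e^{s(x_1 - ρw)} V_0(s)^w [ e^{sσ}·(V_0(s) - V_0(s)^{t+1})/(1 - V_0(s)) + 1 ], where V_0(s) = e^{sρ}V(s) and V_0(s) ≠ 1. -/

import Mathlib

/-!
If `D(τ) < A(t) e^{x₁}` then, by the assumed lower bound on `D`, some breakpoint `u` has
`S(u, τ) · A(u) · c_u < A(t) e^{x₁}`, and since `S ≥ 1` and `A` is nondecreasing this forces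
`u ≤ t`. Markov's inequality applied to `S(u, τ)^{-s}` bounds each of these `t + 1` events by
`a_u^s V^{τ-u}`, where `a_u` is the threshold on `S(u, τ)`. The envelope gives
`a_u^s ≤ e^{s(σ + x₁)} e^{sρ(t-u)}` for `u < t` and `a_t^s ≤ e^{s x₁}`, so the union bound is a
geometric series in `V₀ = e^{sρ} V`.
-/

open MeasureTheory Finset Real

section Chernoff

variable {Ω : Type*} [MeasurableSpace Ω] {μ : Measure Ω} [IsFiniteMeasure μ]

theorem measureReal_lt_le_rpow_mul_integral {Y : Ω → ℝ} (hY : ∀ ω, 0 < Y ω) {s a : ℝ}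
    (hs : 0 < s) (ha : 0 < a) (hint : Integrable (fun ω ↦ Y ω ^ (-s)) μ) :
    μ.real {ω | Y ω < a} ≤ a ^ s * ∫ ω, Y ω ^ (-s) ∂μ := by
  have hmarkov := mul_meas_ge_le_integral_of_nonneg
    (.of_forall fun ω ↦ (rpow_pos_of_pos (hY ω) (-s)).le) hint (a ^ (-s))
  have hsub : {ω | Y ω < a} ⊆ {ω | a ^ (-s) ≤ Y ω ^ (-s)} := fun ω hω ↦
    (rpow_lt_rpow_of_neg (hY ω) hω (neg_neg_of_pos hs)).le
  calc μ.real {ω | Y ω < a} ≤ μ.real {ω | a ^ (-s) ≤ Y ω ^ (-s)} := measureReal_mono hsub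
    _ = a ^ s * (a ^ (-s) * μ.real {ω | a ^ (-s) ≤ Y ω ^ (-s)}) := by
      rw [← mul_assoc, ← rpow_add ha, add_neg_cancel, rpow_zero, one_mul]
    _ ≤ a ^ s * ∫ ω, Y ω ^ (-s) ∂μ := by gcongr

theorem integrable_rpow_neg_of_one_le {Y : Ω → ℝ} (hYm : Measurable Y) (hY : ∀ ω, 1 ≤ Y ω)
    {s : ℝ} (hs : 0 ≤ s) : Integrable (fun ω ↦ Y ω ^ (-s)) μ :=
  .of_bound (hYm.pow_const _).aestronglyMeasurable 1 <| .of_forall fun ω ↦ by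
    rw [norm_of_nonneg (rpow_nonneg (zero_le_one.trans (hY ω)) _)]
    exact rpow_le_one_of_one_le_of_nonpos (hY ω) (neg_nonpos.mpr hs)

end Chernoff

theorem sum_range_pow_sub_eq {K : Type*} [Field K] {r : K} (hr : r ≠ 1) (t : ℕ) :
    ∑ u ∈ range t, r ^ (t - u) = (r - r ^ (t + 1)) / (1 - r) := by
  have hreflect : ∑ u ∈ range t, r ^ (t - u) = r * ∑ i ∈ range t, r ^ i := by
    rw [← sum_range_reflect (fun u ↦ r ^ (t - u)) t, mul_sum]
    refine sum_congr rfl fun i hi ↦ ?_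
    rw [← pow_succ', show t - (t - 1 - i) = i + 1 by have := mem_range.mp hi; omega]
  have h1r : (1 : K) - r ≠ 0 := sub_ne_zero.mpr hr.symm
  have hr1 : r - 1 ≠ 0 := sub_ne_zero.mpr hr
  rw [hreflect, geom_sum_eq hr]
  field_simp
  ring

noncomputable def backlogWeight (x₁ : ℝ) (u : ℕ) : ℝ := if u = 0 then 1 else exp x₁

theorem backlogWeight_pos (x₁ : ℝ) (u : ℕ) : 0 < backlogWeight x₁ u := by
  unfold backlogWeight; split_ifs <;> positivity

theorem one_le_backlogWeight {x₁ : ℝ} (hx₁ : 0 ≤ x₁) (u : ℕ) : 1 ≤ backlogWeight x₁ u := by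
  unfold backlogWeight; split_ifs
  · rfl
  · exact one_le_exp hx₁

theorem setOf_lt_subset_biUnion_range {Ω : Type*} {A : ℕ → ℝ} (hA : Monotone A)
    (hApos : ∀ u, 0 < A u) {P : ℕ → Ω → ℝ} (hP : ∀ u ω, 1 ≤ P u ω) {D : Ω → ℝ} {x₁ : ℝ}
    (hD : ∀ ω, ∃ u, P u ω * A u * backlogWeight x₁ u ≤ D ω) (t : ℕ) :
    {ω | D ω < A t * exp x₁} ⊆
      ⋃ u ∈ range (t + 1), {ω | P u ω < A t * exp x₁ / (A u * backlogWeight x₁ u)} := by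
  intro ω hω
  obtain ⟨u, hu⟩ := hD ω
  have hlt : P u ω * (A u * backlogWeight x₁ u) < A t * exp x₁ := by
    rw [← mul_assoc]; exact hu.trans_lt hω
  have hut : u ≤ t := by
    by_contra! htu
    have hw : backlogWeight x₁ u = exp x₁ := if_neg (by omega)
    have : A t * exp x₁ ≤ A u * backlogWeight x₁ u := by rw [hw]; gcongr; exact hA htu.le
    exact (this.trans (le_mul_of_one_le_left
      (mul_pos (hApos u) (backlogWeight_pos x₁ u)).le (hP u ω))).not_gt hlt
  exact Set.mem_biUnion (mem_range.mpr (by omega))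
    ((lt_div_iff₀ (mul_pos (hApos u) (backlogWeight_pos x₁ u))).mpr hlt)

theorem rpow_mul_exp_div_backlogWeight_le {A : ℕ → ℝ} (hApos : ∀ u, 0 < A u) {x₁ s : ℝ} (hx₁ : 0 ≤ x₁)
    (hs : 0 ≤ s) (t u : ℕ) :
    (A t * exp x₁ / (A u * backlogWeight x₁ u)) ^ s ≤ (A t / A u) ^ s * exp (s * x₁) := by
  have hratio : 0 < A t / A u := div_pos (hApos t) (hApos u)
  calc (A t * exp x₁ / (A u * backlogWeight x₁ u)) ^ s
      = (A t / A u * exp x₁ / backlogWeight x₁ u) ^ s := by ring_nf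
    _ ≤ (A t / A u * exp x₁) ^ s := by
      gcongr
      · exact div_nonneg (by positivity) (backlogWeight_pos x₁ u).le
      · exact div_le_self (by positivity) (one_le_backlogWeight hx₁ u)
    _ = (A t / A u) ^ s * exp (s * x₁) := by
      rw [mul_rpow hratio.le (exp_pos _).le, ← exp_mul, mul_comm x₁]

theorem rpow_le_exp_mul_exp_pow {q σ ρ s : ℝ} (hq : 0 ≤ q) (hs : 0 ≤ s) {n : ℕ}
    (h : q ≤ exp (σ + ρ * n)) : q ^ s ≤ exp (s * σ) * exp (s * ρ) ^ n := by
  calc q ^ s ≤ exp (σ + ρ * n) ^ s := by gcongr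
    _ = exp (s * σ) * exp (s * ρ) ^ n := by
      rw [← exp_mul, ← exp_nat_mul, ← exp_add]; ring_nf

theorem sotat_single_link_general {Ω : Type*} [MeasurableSpace Ω] (μ : Measure Ω)
    [IsProbabilityMeasure μ]
    (A : ℕ → ℝ) (hA0 : A 0 = 1) (hAmono : Monotone A)
    (X : ℕ → Ω → ℝ) (hX1 : ∀ i ω, 1 ≤ X i ω) (hXmeas : ∀ i, Measurable (X i))
    (s V : ℝ) (hs : 0 < s) (hV : 0 < V)
    (t w τ : ℕ) (hτ : τ = t + w)
    (hMellin : ∀ u ≤ τ, ∫ ω, (∏ i ∈ Finset.Ico u τ, X i ω) ^ (-s) ∂μ = V ^ (τ - u))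
    (x₁ : ℝ) (hx₁ : 0 ≤ x₁)
    (σ ρ : ℝ)
    (henv : ∀ u ≤ t, A t / A u ≤ Real.exp (σ + ρ * ((t : ℝ) - (u : ℝ))))
    (hV0 : Real.exp (s * ρ) * V ≠ 1)
    (D : Ω → ℝ)
    (hD : ∀ ω, ∃ u ≤ τ, (∏ i ∈ Finset.Ico u τ, X i ω) * A u *
        (if u = 0 then 1 else Real.exp x₁) ≤ D ω) :
    (μ {ω | D ω < A t * Real.exp x₁}).toReal ≤
      Real.exp (s * (x₁ - ρ * w)) * (Real.exp (s * ρ) * V) ^ w *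
        (Real.exp (s * σ) *
            ((Real.exp (s * ρ) * V) - (Real.exp (s * ρ) * V) ^ (t + 1)) /
              (1 - Real.exp (s * ρ) * V) + 1) := by
  set r := exp (s * ρ) * V with hr
  set S : ℕ → Ω → ℝ := fun u ω ↦ ∏ i ∈ Ico u τ, X i ω
  have hApos : ∀ u, 0 < A u := fun u ↦ one_pos.trans_le (hA0 ▸ hAmono u.zero_le)
  have hS : ∀ u ω, 1 ≤ S u ω := fun u ω ↦ one_le_prod fun i _ ↦ hX1 i ω
  have hchernoff : ∀ u ≤ τ,
      μ.real {ω | S u ω < A t * exp x₁ / (A u * backlogWeight x₁ u)} ≤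
        (A t / A u) ^ s * exp (s * x₁) * V ^ (τ - u) := fun u hu ↦ by
    calc _ ≤ _ := measureReal_lt_le_rpow_mul_integral (fun ω ↦ one_pos.trans_le (hS u ω)) hs
          (div_pos (mul_pos (hApos t) (exp_pos _)) (mul_pos (hApos u) (backlogWeight_pos x₁ u)))
          (integrable_rpow_neg_of_one_le (measurable_prod _ fun i _ ↦ hXmeas i) (hS u) hs.le)
      _ ≤ _ := by
        rw [hMellin u hu]; gcongr; exact rpow_mul_exp_div_backlogWeight_le hApos hx₁ hs.le t u
  have hbefore : ∀ u < t, (A t / A u) ^ s * exp (s * x₁) * V ^ (τ - u) ≤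
      exp (s * x₁) * V ^ w * (exp (s * σ) * r ^ (t - u)) := fun u hu ↦ by
    have henv' := henv u hu.le
    rw [← Nat.cast_sub hu.le] at henv'
    have := rpow_le_exp_mul_exp_pow (div_pos (hApos t) (hApos u)).le hs.le henv'
    calc _ ≤ exp (s * σ) * exp (s * ρ) ^ (t - u) * exp (s * x₁) * V ^ (τ - u) := by gcongr
      _ = _ := by rw [hr, mul_pow, show τ - u = t - u + w by omega, pow_add]; ring
  have hlast : (A t / A t) ^ s * exp (s * x₁) * V ^ (τ - t) = exp (s * x₁) * V ^ w := by
    rw [div_self (hApos t).ne', one_rpow, one_mul, show τ - t = w by omega]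
  have hshift : exp (s * (x₁ - ρ * w)) * r ^ w = exp (s * x₁) * V ^ w := by
    rw [hr, mul_pow, ← exp_nat_mul, ← mul_assoc, ← exp_add]; ring_nf
  have hcover := setOf_lt_subset_biUnion_range hAmono hApos hS
    (fun ω ↦ (hD ω).imp fun _ hu ↦ hu.2) t
  calc μ.real {ω | D ω < A t * exp x₁}
      ≤ ∑ u ∈ range (t + 1), μ.real {ω | S u ω < A t * exp x₁ / (A u * backlogWeight x₁ u)} :=
        (measureReal_mono hcover (measure_ne_top _ _)).trans (measureReal_biUnion_finset_le _ _)
    _ ≤ ∑ u ∈ range (t + 1), (A t / A u) ^ s * exp (s * x₁) * V ^ (τ - u) :=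
        sum_le_sum fun u hu ↦ hchernoff u (by have := mem_range.mp hu; omega)
    _ ≤ exp (s * x₁) * V ^ w * (exp (s * σ) * ∑ u ∈ range t, r ^ (t - u) + 1) := by
        rw [sum_range_succ, hlast, mul_add, mul_one, mul_sum, mul_sum]
        exact add_le_add_left (sum_le_sum fun u hu ↦ hbefore u (mem_range.mp hu)) _
    _ = _ := by rw [sum_range_pow_sub_eq hV0, ← hshift]; ring

/-- Single-link SOTAT bound under `(σ,ρ)`-bounded arrivals (Corollary 1):
with `V₀ = e^{sρ} V ≠ 1`,
`P(W(t) > w) ≤ e^{s(x₁ - ρw)} V₀^w [ e^{sσ}(V₀ - V₀^{t+1})/(1 - V₀) + 1 ]`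
for every `s > 0`, hence for the minimum over `s > 0`. -/
theorem sotat_single_link {Ω : Type*} [MeasurableSpace Ω] (μ : Measure Ω)
    [IsProbabilityMeasure μ]
    (A : ℕ → ℝ) (hA0 : A 0 = 1) (hAmono : Monotone A)
    (X : ℕ → Ω → ℝ) (hX1 : ∀ i ω, 1 ≤ X i ω) (hXmeas : ∀ i, Measurable (X i))
    (s V : ℝ) (hs : 0 < s) (hV : 0 < V)
    (t w τ : ℕ) (ht : 1 ≤ t) (hτ : τ = t + w)
    (hMellin : ∀ u ≤ τ, ∫ ω, (∏ i ∈ Finset.Ico u τ, X i ω) ^ (-s) ∂μ = V ^ (τ - u))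
    (x₁ : ℝ) (hx₁ : 0 ≤ x₁)
    (σ ρ : ℝ) (hσ : 0 ≤ σ) (hρ : 0 ≤ ρ)
    (henv : ∀ u ≤ t, A t / A u ≤ Real.exp (σ + ρ * ((t : ℝ) - (u : ℝ))))
    (hV0 : Real.exp (s * ρ) * V ≠ 1)
    (D : Ω → ℝ) (hDmeas : Measurable D)
    (hD : ∀ ω, ∃ u ≤ τ, (∏ i ∈ Finset.Ico u τ, X i ω) * A u *
        (if u = 0 then 1 else Real.exp x₁) ≤ D ω) :
    (μ {ω | D ω < A t * Real.exp x₁}).toReal ≤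
      Real.exp (s * (x₁ - ρ * w)) * (Real.exp (s * ρ) * V) ^ w *
        (Real.exp (s * σ) *
            ((Real.exp (s * ρ) * V) - (Real.exp (s * ρ) * V) ^ (t + 1)) /
              (1 - Real.exp (s * ρ) * V) + 1) :=
  sotat_single_link_general μ A hA0 hAmono X hX1 hXmeas s V hs hV t w τ hτ hMellin x₁ hx₁ σ ρ henv
    hV0 D hD
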